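/- For every infinite cardinal λ, initial λ-compactness is preserved under taking arbitrary products (i.e., every product of initially λ-compact spaces is initially λ-compact) if and only if there exist a set J and an ultrafilter D on J such that a topological space is initially λ-compact exactly when it is D-compact. -/

import Mathlib

universe u v

open Cardinal

/-- `p` is an `F`-limit point of the sequence `s`. -/
def FLimitPt {I : Type*} {X : Type*} [TopologicalSpace X] (F : Filter I)
    (s : I → X) (p : X) : Prop :=
  ∀ U : Set X, IsOpen U → p ∈ U → {i | s i ∈ U} ∈ F

/-- `X` is `F`-compact: every sequence indexed by the underlying set of `F`
has an `F`-limit point. -/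
def FCompact {I : Type*} (F : Filter I) (X : Type*) [TopologicalSpace X] : Prop :=
  ∀ s : I → X, ∃ p : X, FLimitPt F s p

/-- A space is initially `lam`-compact if every open cover of cardinality at
most `lam` has a finite subcover. -/
def InitiallyCompact (lam : Cardinal.{u}) (X : Type u) [TopologicalSpace X] : Prop :=
  ∀ 𝒰 : Set (Set X), #𝒰 ≤ lam → (∀ U ∈ 𝒰, IsOpen U) → ⋃₀ 𝒰 = Set.univ →
    ∃ 𝒱 ⊆ 𝒰, 𝒱.Finite ∧ ⋃₀ 𝒱 = Set.univ

/-! `D`-compactness is productive, which gives one direction. Conversely, let `#α = lam` and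
`J = Finset α`. A sequence `s` in a space `X` is carried by `x ↦ comap s (𝓝 x)` into a subspace
of `Filter J`, initially `lam`-compact if `X` is, and a `D`-limit of the image of `s` yields a
`D`-limit of `s`. So it suffices to find `D` that works for every sequence in every initially
`lam`-compact subspace of `Filter J`. The product of all these subspaces, one factor for each
such subspace and sequence in it, is initially `lam`-compact. Along the diagonal sequence the
`lam` sets `{t | F ⊆ t}` generate a filter with a cluster point, and an ultrafilter `D ≥ atTop`
along which the diagonal sequence converges to it does the job in every factor at once.
Finally `D ≥ atTop` makes `D`-compact spaces initially `lam`-compact: if a cover `(U a)` has no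
finite subcover, choose `x t ∉ ⋃ a ∈ t, U a`; a `D`-limit of `x` lies in no `U a`. -/

open Set Filter Topology

section

variable {lam : Cardinal.{u}} {X : Type u} [TopologicalSpace X]

theorem InitiallyCompact.elim_finite_subcover (hX : InitiallyCompact lam X) {ι : Type u}
    (hι : #ι ≤ lam) (U : ι → Set X) (hU : ∀ i, IsOpen (U i)) (hcover : ⋃ i, U i = Set.univ) :
    ∃ t : Finset ι, ⋃ i ∈ t, U i = Set.univ := by
  obtain ⟨𝒱, h𝒱, hfin, h𝒱cover⟩ :=
    hX (range U) (mk_range_le.trans hι) (forall_mem_range.2 hU) (sUnion_range U ▸ hcover)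
  rw [← image_univ] at h𝒱
  obtain ⟨t, -, htfin, htcover⟩ := (exists_subset_image_finite_and
    (p := fun 𝒲 => ⋃₀ 𝒲 = Set.univ)).1 ⟨𝒱, h𝒱, hfin, h𝒱cover⟩
  exact ⟨htfin.toFinset, by simpa [sUnion_image] using htcover⟩

theorem initiallyCompact_of_elim_finite_subcover {α : Type u} (hα : lam ≤ #α)
    (h : ∀ U : α → Set X, (∀ a, IsOpen (U a)) → ⋃ a, U a = Set.univ →
      ∃ t : Finset α, ⋃ a ∈ t, U a = Set.univ) :
    InitiallyCompact lam X := by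
  intro 𝒰 h𝒰 hopen hcover
  obtain ⟨e⟩ := (Cardinal.le_def _ _).1 (h𝒰.trans hα)
  obtain ⟨t, ht⟩ := h (fun a => ⋃ (V : 𝒰) (_ : e V = a), V)
    (fun a => isOpen_iUnion fun V => isOpen_iUnion fun _ => hopen V V.2)
    (by
      refine eq_univ_of_forall fun x => ?_
      obtain ⟨V, hV, hxV⟩ := hcover ▸ mem_univ x
      exact mem_iUnion.2 ⟨e ⟨V, hV⟩, mem_iUnion₂.2 ⟨⟨V, hV⟩, rfl, hxV⟩⟩)
  refine ⟨Subtype.val '' (e ⁻¹' t), by simp,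
    (t.finite_toSet.preimage e.injective.injOn).image _, ?_⟩
  refine eq_univ_of_forall fun x => ?_
  obtain ⟨a, ha, hxa⟩ := mem_iUnion₂.1 (eq_univ_iff_forall.1 ht x)
  obtain ⟨V, rfl, hxV⟩ := mem_iUnion₂.1 hxa
  exact ⟨V, mem_image_of_mem _ ha, hxV⟩

theorem InitiallyCompact.of_surjective {Y : Type u} [TopologicalSpace Y] {f : X → Y}
    (hX : InitiallyCompact lam X) (hf : Continuous f) (hsurj : Function.Surjective f) :
    InitiallyCompact lam Y := by
  intro 𝒱 h𝒱 hopen hcover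
  obtain ⟨t, ht⟩ := hX.elim_finite_subcover h𝒱 (fun V : 𝒱 => f ⁻¹' V)
    (fun V => (hopen V V.2).preimage hf)
    (by simp only [← preimage_iUnion, ← sUnion_eq_iUnion, hcover, preimage_univ])
  refine ⟨Subtype.val '' (t : Set 𝒱), by simp, t.finite_toSet.image _, ?_⟩
  refine eq_univ_of_forall fun y => ?_
  obtain ⟨x, rfl⟩ := hsurj y
  obtain ⟨V, hV, hxV⟩ := mem_iUnion₂.1 (eq_univ_iff_forall.1 ht x)
  exact ⟨V, mem_image_of_mem _ hV, hxV⟩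

theorem InitiallyCompact.exists_clusterPt (hX : InitiallyCompact lam X) {ι : Type u}
    (hι : #ι ≤ lam) {p : ι → Prop} {s : ι → Set X} {f : Filter X} [NeBot f]
    (hf : f.HasBasis p s) : ∃ x, ClusterPt x f := by
  by_contra! h
  obtain ⟨t, ht⟩ := hX.elim_finite_subcover ((mk_subtype_le p).trans hι)
    (fun i : Subtype p => (closure (s i))ᶜ) (fun i => isClosed_closure.isOpen_compl)
    (by
      refine eq_univ_of_forall fun x => ?_
      simpa [hf.clusterPt_iff_forall_mem_closure] using h x)
  obtain ⟨y, hy⟩ :=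
    Filter.nonempty_of_mem ((biInter_finset_mem t).2 fun i _ => hf.mem_of_mem i.2)
  obtain ⟨i, hi, hyi⟩ := mem_iUnion₂.1 (eq_univ_iff_forall.1 ht y)
  exact hyi (subset_closure (mem_iInter₂.1 hy i hi))

theorem fLimitPt_iff_tendsto {I X : Type*} [TopologicalSpace X] {F : Filter I}
    {s : I → X} {p : X} : FLimitPt F s p ↔ Tendsto s F (𝓝 p) :=
  tendsto_nhds.symm

theorem FCompact.pi {ι J : Type*} {D : Filter J} {X : ι → Type*} [∀ i, TopologicalSpace (X i)]
    (h : ∀ i, FCompact D (X i)) : FCompact D (∀ i, X i) := by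
  intro s
  choose q hq using fun i => h i fun j => s j i
  exact ⟨q, fLimitPt_iff_tendsto.2 (tendsto_pi_nhds.2 fun i => fLimitPt_iff_tendsto.1 (hq i))⟩

theorem FCompact.elim_finite_subcover {ι X : Type*} [TopologicalSpace X]
    {D : Filter (Finset ι)} [NeBot D] (hD : D ≤ atTop) (hX : FCompact D X)
    (U : ι → Set X) (hU : ∀ i, IsOpen (U i)) (hcover : ⋃ i, U i = Set.univ) :
    ∃ t : Finset ι, ⋃ i ∈ t, U i = Set.univ := by
  by_contra! h
  choose x hx using fun t => (ne_univ_iff_exists_notMem _).1 (h t)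
  obtain ⟨p, hp⟩ := hX x
  obtain ⟨i, hpi⟩ := mem_iUnion.1 (eq_univ_iff_forall.1 hcover p)
  have hxU : ∀ᶠ t in D, x t ∈ U i := hp _ (hU i) hpi
  have hit : ∀ᶠ t in D, i ∈ t :=
    hD ((eventually_ge_atTop {i}).mono fun _ => Finset.singleton_subset_iff.1)
  obtain ⟨t, hxt, hi⟩ := (hxU.and hit).exists
  exact hx t (mem_iUnion₂.2 ⟨i, hi, hxt⟩)

theorem Filter.continuous_comap {α β : Type*} (f : α → β) : Continuous (comap f) := by
  refine continuous_iff_continuousAt.2 fun l => Filter.tendsto_nhds.2 fun A hA => ?_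
  simp only [mem_comap'']
  exact isOpen_setOfPred_mem.mem_nhds (mem_comap''.1 hA)

theorem fCompact_of_forall_subspace_filter {J : Type u} {D : Filter J}
    (h : ∀ Y : Set (Filter J), InitiallyCompact lam Y → FCompact D Y)
    (hX : InitiallyCompact lam X) : FCompact D X := by
  intro s
  let φ : X → Filter J := fun x => comap s (𝓝 x)
  have hφ : Continuous φ := (Filter.continuous_comap s).comp (continuous_nhds (X := X))
  obtain ⟨⟨_, x, rfl⟩, hx⟩ := h (range φ)
    (hX.of_surjective hφ.rangeFactorization rangeFactorization_surjective)
    (fun j => ⟨φ (s j), mem_range_self _⟩)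
  rw [fLimitPt_iff_tendsto, tendsto_subtype_rng, Filter.tendsto_nhds] at hx
  refine ⟨x, fun U hU hxU => ?_⟩
  filter_upwards [hx _ (preimage_mem_comap (hU.mem_nhds hxU))] with j hj
  obtain ⟨V, hV, hVU⟩ := mem_comap.1 hj
  exact hVU (mem_preimage.2 (mem_of_mem_nhds hV))

end

theorem exists_ultrafilter_le_atTop_forall_fCompact {lam : Cardinal.{u}} {α : Type u}
    (hα : #(Finset α) ≤ lam)
    (hprod : ∀ (J : Type u) (X : J → Type u) [∀ j, TopologicalSpace (X j)]
      [∀ j, Nonempty (X j)],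
      (∀ j, InitiallyCompact lam (X j)) → InitiallyCompact lam (∀ j, X j)) :
    ∃ D : Ultrafilter (Finset α), (D : Filter (Finset α)) ≤ atTop ∧
      ∀ Y : Set (Filter (Finset α)), InitiallyCompact lam Y →
        FCompact (D : Filter (Finset α)) Y := by
  let ι := Σ Y : {Y : Set (Filter (Finset α)) // InitiallyCompact lam Y}, Finset α → Y.1
  let σ : Finset α → ∀ i : ι, i.1.1 := fun t i => i.2 t
  have hZ : InitiallyCompact lam (∀ i : ι, i.1.1) :=
    @hprod ι (fun i => i.1.1) _ (fun i => ⟨i.2 ∅⟩) fun i => i.1.2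
  obtain ⟨p, hp⟩ := hZ.exists_clusterPt hα (atTop_basis.map σ)
  obtain ⟨D, hDle, hDp⟩ := mapClusterPt_iff_ultrafilter.1 hp
  exact ⟨D, hDle, fun Y hY l =>
    ⟨p ⟨⟨Y, hY⟩, l⟩, fLimitPt_iff_tendsto.2 (tendsto_pi_nhds.1 hDp ⟨⟨Y, hY⟩, l⟩)⟩⟩

theorem stmt_8 (lam : Cardinal.{u}) (hlam : ℵ₀ ≤ lam) :
    -- initial `lam`-compactness is preserved under arbitrary products
    (∀ (J : Type u) (X : J → Type u) [t : ∀ j, TopologicalSpace (X j)]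
        [∀ j, Nonempty (X j)],
        (∀ j, InitiallyCompact lam (X j)) → InitiallyCompact lam (∀ j, X j))
    ↔ -- iff some ultrafilter `D` (over some set `J`) is such that
      -- `D`-compactness is equivalent to initial `lam`-compactness
      ∃ (J : Type u) (D : Ultrafilter J),
        ∀ (X : Type u) [t : TopologicalSpace X] [Nonempty X],
          (InitiallyCompact lam X ↔ FCompact (D : Filter J) X) := by
  refine ⟨fun hprod => ?_, fun ⟨J, D, hD⟩ I X _ _ hX =>
    (hD _).2 (FCompact.pi fun i => (hD (X i)).1 (hX i))⟩
  have : Infinite lam.out := Cardinal.infinite_iff.2 (by rwa [mk_out])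
  obtain ⟨D, hDle, hD⟩ := exists_ultrafilter_le_atTop_forall_fCompact
    (by rw [mk_finset_of_infinite lam.out, mk_out]) hprod
  refine ⟨_, D, fun X _ _ => ⟨fCompact_of_forall_subspace_filter hD, fun hX => ?_⟩⟩
  exact initiallyCompact_of_elim_finite_subcover (mk_out lam).ge
    fun U hU hcover => hX.elim_finite_subcover hDle U hU hcover
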